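/- arXiv:1410.1518 — 2 statements merged into one kernel-verified Lean document; each statement's English description precedes it below -/
import Mathlib

section
/- Under the general setup, assume the family {U_n}_{n∈ℕ} of random variables is weakly relatively compact (tight) and the coherency condition holds. Then for every t ∈ ℝ^m one has lim_{n→∞} |f_n(t) − g_n(t)| = 0, where f_n is the characteristic function of Z_n and g_n(t) = E[h(U_n t)·exp(i⟨t, V_n⟩)]. -/
open MeasureTheory ProbabilityTheory Filter Topology
open scoped RealInnerProductSpace

/-- The characteristic function of an `ℝ^m`-valued random vector `X`
on a probability space `(Ω, P)`, evaluated at `t`. -/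
noncomputable def charFn {Ω : Type*} [MeasurableSpace Ω] (P : Measure Ω) {m : ℕ}
    (X : Ω → EuclideanSpace ℝ (Fin m)) (t : EuclideanSpace ℝ (Fin m)) : ℂ :=
  ∫ ω, Complex.exp ((⟪t, X ω⟫ : ℝ) * Complex.I) ∂P

/-!
Conditioning on `Nₙ = k` and using the independence of `Nₙ` and `S_{n,k}` gives
`fₙ(t) = E[h_{n,Nₙ}(Uₙ t) exp(i⟨t, Vₙ⟩)]`, hence `|fₙ(t) − gₙ(t)| ≤ E|h_{n,Nₙ}(Uₙ t) − h(Uₙ t)|`.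
On `{|Uₙ| ≤ R}` the integrand is at most the supremum of `|h_{n,Nₙ} − h|` over the ball of
radius `R‖t‖`, whose mean tends to `0` by coherency; elsewhere it is at most `2`, and tightness
makes `P(|Uₙ| > R)` uniformly small.
-/

lemma tendsto_zero_of_forall_le_add {ι : Type*} {l : Filter ι} {x : ι → ℝ}
    (hx : ∀ i, 0 ≤ x i)
    (h : ∀ ε > 0, ∃ y : ι → ℝ, Tendsto y l (𝓝 0) ∧ ∀ᶠ i in l, x i ≤ y i + ε) :
    Tendsto x l (𝓝 0) := by
  refine tendsto_order.2 ⟨fun a ha => Eventually.of_forall fun i => ha.trans_le (hx i),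
    fun ε hε => ?_⟩
  obtain ⟨y, hy, hxy⟩ := h (ε / 2) (half_pos hε)
  filter_upwards [hxy, hy.eventually (gt_mem_nhds (half_pos hε))] with i hxi hyi
  linarith

lemma le_biSup_closedBall_add_indicator {E : Type*} [SeminormedAddCommGroup E]
    [NormedSpace ℝ E] {F : E → ℝ} {C : ℝ} (hF0 : ∀ s, 0 ≤ F s) (hFC : ∀ s, F s ≤ C)
    {R T : ℝ} {t : E} (hRT : R * ‖t‖ ≤ T) (u : ℝ) :
    F (u • t) ≤ (⨆ s ∈ Metric.closedBall (0 : E) T, F s) +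
      {x : ℝ | R < |x|}.indicator (fun _ => C) u := by
  by_cases hu : R < |u|
  · have hsup : 0 ≤ ⨆ s ∈ Metric.closedBall (0 : E) T, F s :=
      Real.iSup_nonneg fun s => Real.iSup_nonneg fun _ => hF0 s
    rw [Set.indicator_of_mem (s := {x : ℝ | R < |x|}) hu]
    linarith [hFC (u • t)]
  · have hmem : u • t ∈ Metric.closedBall (0 : E) T := by
      rw [mem_closedBall_zero_iff, norm_smul, Real.norm_eq_abs]
      nlinarith [norm_nonneg t, not_lt.1 hu]
    have hbdd : BddAbove (⋃ s, Set.range fun _ : s ∈ Metric.closedBall (0 : E) T => F s) :=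
      ⟨C, by
        simp only [mem_upperBounds, Set.mem_iUnion, Set.mem_range]
        rintro _ ⟨s, _, rfl⟩
        exact hFC s⟩
    rw [Set.indicator_of_notMem (s := {x : ℝ | R < |x|}) hu, add_zero]
    exact le_ciSup₂ (f := fun s (_ : s ∈ Metric.closedBall (0 : E) T) => F s) hbdd _ hmem

section RandomIndex

variable {Ω : Type*} [MeasurableSpace Ω] {P : Measure Ω} {N : Ω → ℕ}

lemma exists_forall_measureReal_le_of_tendsto_iSup {ι : Type*} {U : ι → Ω → ℝ}
    (htight : Tendsto (fun R : ℝ => ⨆ i, P {ω | R < |U i ω|}) atTop (𝓝 0))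
    {ε : ℝ} (hε : 0 < ε) : ∃ R ≥ 0, ∀ i, P.real {ω | R < |U i ω|} ≤ ε := by
  obtain ⟨R, hR, hR0⟩ := ((htight.eventually_lt_const (ENNReal.ofReal_pos.2 hε)).and
    (eventually_ge_atTop 0)).exists
  exact ⟨R, hR0, fun i => ENNReal.toReal_le_of_le_ofReal hε.le ((le_iSup _ i).trans hR.le)⟩

lemma integrable_comp_of_norm_le [IsFiniteMeasure P] {F : Type*} [NormedAddCommGroup F]
    (hN : Measurable N) {q : ℕ → F} {C : ℝ} (hq : ∀ k, ‖q k‖ ≤ C) :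
    Integrable (fun ω => q (N ω)) P :=
  .of_bound (StronglyMeasurable.of_discrete.comp_measurable hN).aestronglyMeasurable C
    (ae_of_all _ fun _ => hq _)

lemma integral_eq_tsum_setIntegral_preimage_singleton {F : Type*} [NormedAddCommGroup F]
    [NormedSpace ℝ F] (hN : Measurable N) {f : Ω → F} (hf : Integrable f P) :
    ∫ ω, f ω ∂P = ∑' k, ∫ ω in N ⁻¹' {k}, f ω ∂P := by
  have hcover : (⋃ k, N ⁻¹' {k}) = Set.univ := by ext ω; simp
  rw [← integral_iUnion (fun k => hN (measurableSet_singleton k))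
    (fun i j hij => (Set.disjoint_singleton.2 hij).preimage N)
    (by rw [hcover]; exact hf.integrableOn), hcover, setIntegral_univ]

theorem integral_comp_randomIndex [IsFiniteMeasure P] {E F : Type*} [MeasurableSpace E]
    [NormedAddCommGroup F] [NormedSpace ℝ F] [CompleteSpace F] [MeasurableSpace F] [BorelSpace F]
    [SecondCountableTopology F] (hN : Measurable N) {X : ℕ → Ω → E} (hX : ∀ k, Measurable (X k))
    (hind : ∀ k, IndepFun N (X k) P) {φ : ℕ → E → F} (hφ : ∀ k, Measurable (φ k)) {C : ℝ}
    (hC : ∀ k x, ‖φ k x‖ ≤ C) :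
    ∫ ω, φ (N ω) (X (N ω) ω) ∂P = ∫ ω, (∫ ω', φ (N ω) (X (N ω) ω') ∂P) ∂P := by
  have hmeas : Measurable fun ω => φ (N ω) (X (N ω) ω) :=
    (measurable_from_prod_countable_left (f := fun p : Ω × ℕ => φ p.2 (X p.2 p.1))
      fun k => (hφ k).comp (hX k)).comp (measurable_id.prodMk hN)
  have hmean_le : ∀ k, ‖∫ ω, φ k (X k ω) ∂P‖ ≤ C * P.real Set.univ := fun k =>
    norm_integral_le_of_norm_le_const (ae_of_all _ fun _ => hC _ _)
  rw [integral_eq_tsum_setIntegral_preimage_singleton hN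
      (.of_bound hmeas.aestronglyMeasurable C (ae_of_all _ fun _ => hC _ _)),
    integral_eq_tsum_setIntegral_preimage_singleton hN (integrable_comp_of_norm_le hN hmean_le)]
  refine tsum_congr fun k => ?_
  have hk : MeasurableSet (N ⁻¹' {k}) := hN (measurableSet_singleton k)
  have hfiber (g : ℕ → Ω → F) :
      ∫ ω in N ⁻¹' {k}, g (N ω) ω ∂P = ∫ ω in N ⁻¹' {k}, g k ω ∂P :=
    setIntegral_congr_fun hk fun ω hω => by rw [show N ω = k from hω]
  have hmean : ∫ ω in N ⁻¹' {k}, φ k (X k ω) ∂P = P.real (N ⁻¹' {k}) • ∫ ω, φ k (X k ω) ∂P :=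
    ((IndepFun_iff_Indep _ _ _).1 (hind k)).setIntegral_eq_smul hN.comap_le
      (hX k).aemeasurable ⟨{k}, measurableSet_singleton k, rfl⟩ (hφ k).aestronglyMeasurable
  rw [hfiber fun j ω => φ j (X j ω), hfiber fun j _ => ∫ ω', φ j (X j ω') ∂P, setIntegral_const,
    hmean]

theorem integral_comp_smul_le_integral_biSup_add [IsFiniteMeasure P] {E : Type*}
    [SeminormedAddCommGroup E] [NormedSpace ℝ E] (hN : Measurable N) {F : ℕ → E → ℝ} {C : ℝ}
    (hF0 : ∀ k s, 0 ≤ F k s) (hFC : ∀ k s, F k s ≤ C) {R T : ℝ} {t : E} (hRT : R * ‖t‖ ≤ T)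
    (u : ℕ → ℝ) :
    ∫ ω, F (N ω) (u (N ω) • t) ∂P ≤
      ∫ ω, (⨆ s ∈ Metric.closedBall (0 : E) T, F (N ω) s) ∂P +
        P.real {ω | R < |u (N ω)|} * C := by
  have hC0 : 0 ≤ C := (hF0 0 0).trans (hFC 0 0)
  have hF : ∀ k s, ‖F k s‖ ≤ C := fun k s => by rw [Real.norm_of_nonneg (hF0 k s)]; exact hFC k s
  have hsup : ∀ k, ‖⨆ s ∈ Metric.closedBall (0 : E) T, F k s‖ ≤ C := fun k => by
    rw [Real.norm_of_nonneg (Real.iSup_nonneg fun s => Real.iSup_nonneg fun _ => hF0 k s)]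
    exact Real.iSup_le (fun s => Real.iSup_le (fun _ => hFC k s) hC0) hC0
  have htail : ∀ k, ‖{x : ℝ | R < |x|}.indicator (fun _ => C) (u k)‖ ≤ C := fun k =>
    (norm_indicator_le_norm_self _ _).trans (Real.norm_of_nonneg hC0).le
  have hsupInt := integrable_comp_of_norm_le (P := P) hN hsup
  have htailInt := integrable_comp_of_norm_le (P := P) hN htail
  have htail_eq : ∫ ω, {x : ℝ | R < |x|}.indicator (fun _ => C) (u (N ω)) ∂P =
      P.real {ω | R < |u (N ω)|} * C := by
    simp_rw [← Set.indicator_comp_right fun ω => u (N ω)]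
    exact integral_indicator_const C (hN (MeasurableSet.of_discrete (s := {k | R < |u k|})))
  calc ∫ ω, F (N ω) (u (N ω) • t) ∂P
      ≤ ∫ ω, ((⨆ s ∈ Metric.closedBall (0 : E) T, F (N ω) s) +
          {x : ℝ | R < |x|}.indicator (fun _ => C) (u (N ω))) ∂P :=
        integral_mono (integrable_comp_of_norm_le hN fun k => hF k (u k • t))
          (hsupInt.add htailInt) fun ω => le_biSup_closedBall_add_indicator (hF0 _) (hFC _) hRT _
    _ = _ := by rw [integral_add hsupInt htailInt, htail_eq]

end RandomIndex

section CharFn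

variable {Ω : Type*} [MeasurableSpace Ω] {P : Measure Ω} [IsProbabilityMeasure P] {m : ℕ}

lemma norm_charFn_le_one (X : Ω → EuclideanSpace ℝ (Fin m)) (t : EuclideanSpace ℝ (Fin m)) :
    ‖charFn P X t‖ ≤ 1 := by
  unfold charFn
  simpa using norm_integral_le_of_norm_le_const (μ := P)
    (ae_of_all _ fun ω => (Complex.norm_exp_ofReal_mul_I ⟪t, X ω⟫).le)

lemma norm_charFn_sub_charFn_le_two (X X' : Ω → EuclideanSpace ℝ (Fin m))
    (t : EuclideanSpace ℝ (Fin m)) : ‖charFn P X t - charFn P X' t‖ ≤ 2 :=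
  (norm_sub_le _ _).trans <| by
    linarith [norm_charFn_le_one (P := P) X t, norm_charFn_le_one (P := P) X' t]

variable {N : Ω → ℕ} {Y : ℕ → Ω → EuclideanSpace ℝ (Fin m)}

theorem charFn_randomIndex_smul_add (hN : Measurable N) (hY : ∀ k, Measurable (Y k))
    (hind : ∀ k, IndepFun N (Y k) P) (u : ℕ → ℝ) (v : ℕ → EuclideanSpace ℝ (Fin m))
    (t : EuclideanSpace ℝ (Fin m)) :
    charFn P (fun ω => u (N ω) • Y (N ω) ω + v (N ω)) t =
      ∫ ω, charFn P (Y (N ω)) (u (N ω) • t) *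
        Complex.exp ((⟪t, v (N ω)⟫ : ℝ) * Complex.I) ∂P := by
  have hsplit (k : ℕ) (x : EuclideanSpace ℝ (Fin m)) :
      Complex.exp ((⟪t, u k • x + v k⟫ : ℝ) * Complex.I) =
        Complex.exp ((⟪u k • t, x⟫ : ℝ) * Complex.I) *
          Complex.exp ((⟪t, v k⟫ : ℝ) * Complex.I) := by
    rw [inner_add_right, real_inner_smul_right, real_inner_smul_left, Complex.ofReal_add, add_mul,
      Complex.exp_add]
  simp only [charFn, hsplit]
  refine (integral_comp_randomIndex hN hY hind (φ := fun k x =>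
    Complex.exp ((⟪u k • t, x⟫ : ℝ) * Complex.I) * Complex.exp ((⟪t, v k⟫ : ℝ) * Complex.I))
    (fun k => by fun_prop) (C := 1)
    fun k x => by simp only [norm_mul, Complex.norm_exp_ofReal_mul_I, mul_one, le_refl]).trans ?_
  simp only [integral_mul_const]

theorem norm_charFn_randomIndex_sub_le (hN : Measurable N) (hY : ∀ k, Measurable (Y k))
    (hind : ∀ k, IndepFun N (Y k) P) (u : ℕ → ℝ) (v : ℕ → EuclideanSpace ℝ (Fin m))
    (X : Ω → EuclideanSpace ℝ (Fin m)) (t : EuclideanSpace ℝ (Fin m)) :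
    ‖charFn P (fun ω => u (N ω) • Y (N ω) ω + v (N ω)) t -
        ∫ ω, charFn P X (u (N ω) • t) * Complex.exp ((⟪t, v (N ω)⟫ : ℝ) * Complex.I) ∂P‖ ≤
      ∫ ω, ‖charFn P (Y (N ω)) (u (N ω) • t) - charFn P X (u (N ω) • t)‖ ∂P := by
  have hbound (Z : ℕ → Ω → EuclideanSpace ℝ (Fin m)) (k : ℕ) :
      ‖charFn P (Z k) (u k • t) * Complex.exp ((⟪t, v k⟫ : ℝ) * Complex.I)‖ ≤ 1 := by
    rw [norm_mul, Complex.norm_exp_ofReal_mul_I, mul_one]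
    exact norm_charFn_le_one _ _
  rw [charFn_randomIndex_smul_add hN hY hind, ← integral_sub
    (integrable_comp_of_norm_le hN (hbound Y)) (integrable_comp_of_norm_le hN (hbound fun _ => X))]
  refine (norm_integral_le_integral_norm _).trans_eq (integral_congr_ae (ae_of_all _ fun ω => ?_))
  dsimp only
  rw [← sub_mul, norm_mul, Complex.norm_exp_ofReal_mul_I, mul_one]

end CharFn

theorem lemma1_rapprochement_general
    {Ω : Type*} [MeasurableSpace Ω] (P : Measure Ω) [IsProbabilityMeasure P]
    (m : ℕ)
    -- the double array S_{n,k} and its measurability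
    (S : ℕ → ℕ → Ω → EuclideanSpace ℝ (Fin m))
    (hSmeas : ∀ n k, Measurable (S n k))
    -- non-random centering vectors and positive scaling constants
    (a : ℕ → ℕ → EuclideanSpace ℝ (Fin m)) (b : ℕ → ℕ → ℝ) (hb : ∀ n k, 0 < b n k)
    -- the random sample sizes, positive, measurable, independent of each S_{n,k}
    (N : ℕ → Ω → ℕ) (hNmeas : ∀ n, Measurable (N n))
    (hNindep : ∀ n k, IndepFun (N n) (S n k) P)
    -- non-random vectors cₙ and positive constants dₙ
    (c : ℕ → EuclideanSpace ℝ (Fin m)) (d : ℕ → ℝ)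
    -- Y_{n,k} = b_{n,k}⁻¹ (S_{n,k} − a_{n,k})
    (Y : ℕ → ℕ → Ω → EuclideanSpace ℝ (Fin m))
    (hY : ∀ n k ω, Y n k ω = (b n k)⁻¹ • (S n k ω - a n k))
    -- Z_n = d_n⁻¹ (S_{n,N_n} − c_n)
    (Z : ℕ → Ω → EuclideanSpace ℝ (Fin m))
    (hZ : ∀ n ω, Z n ω = (d n)⁻¹ • (S n (N n ω) ω - c n))
    -- U_n = d_n⁻¹ b_{n,N_n},  V_n = d_n⁻¹ (a_{n,N_n} − c_n)
    (U : ℕ → Ω → ℝ) (hU : ∀ n ω, U n ω = (d n)⁻¹ * b n (N n ω))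
    (V : ℕ → Ω → EuclideanSpace ℝ (Fin m))
    (hV : ∀ n ω, V n ω = (d n)⁻¹ • (a n (N n ω) - c n))
    -- the limit random vector Y with characteristic function h
    (Ylim : Ω → EuclideanSpace ℝ (Fin m))
    (h : EuclideanSpace ℝ (Fin m) → ℂ) (hh : ∀ t, h t = charFn P Ylim t)
    -- weak relative compactness (tightness) of the family {U_n}
    (htight : Tendsto (fun R : ℝ => ⨆ n, P {ω | R < |U n ω|}) atTop (𝓝 0))
    -- coherency condition: for every T > 0,
    -- E[ sup_{‖t‖ ≤ T} |h_{n,N_n}(t) − h(t)| ] → 0 as n → ∞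
    (hcoh : ∀ T : ℝ, 0 < T →
      Tendsto (fun n => ∫ ω,
          ⨆ t ∈ Metric.closedBall (0 : EuclideanSpace ℝ (Fin m)) T,
            ‖(charFn P (Y n (N n ω)) t - h t)‖ ∂P)
        atTop (𝓝 0)) :
    -- conclusion: for every t, |fₙ(t) − gₙ(t)| → 0
    ∀ t : EuclideanSpace ℝ (Fin m),
      Tendsto (fun n =>
          ‖(charFn P (Z n) t -
            ∫ ω, h ((U n ω) • t) * Complex.exp ((⟪t, V n ω⟫ : ℝ) * Complex.I) ∂P)‖)
        atTop (𝓝 0) := by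
  intro t
  obtain rfl : h = charFn P Ylim := funext hh
  obtain rfl : U = fun n ω => (d n)⁻¹ * b n (N n ω) := by ext n ω : 2; exact hU n ω
  obtain rfl : V = fun n ω => (d n)⁻¹ • (a n (N n ω) - c n) := by ext n ω : 2; exact hV n ω
  have hYmeas (n k : ℕ) : Measurable (Y n k) := by rw [funext (hY n k)]; fun_prop
  have hYind (n k : ℕ) : IndepFun (N n) (Y n k) P := by
    rw [funext (hY n k)]
    exact (hNindep n k).comp measurable_id
      (by fun_prop : Measurable fun x => (b n k)⁻¹ • (x - a n k))
  have hZ_affine (n : ℕ) :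
      Z n = fun ω => ((d n)⁻¹ * b n (N n ω)) • Y n (N n ω) ω + (d n)⁻¹ • (a n (N n ω) - c n) := by
    ext1 ω
    rw [hZ, hY, smul_smul, mul_assoc, mul_inv_cancel₀ (hb n (N n ω)).ne', mul_one, ← smul_add,
      sub_add_sub_cancel]
  refine tendsto_zero_of_forall_le_add (fun n => norm_nonneg _) fun ε hε => ?_
  obtain ⟨R, hR0, hR⟩ := exists_forall_measureReal_le_of_tendsto_iSup htight (half_pos hε)
  refine ⟨_, hcoh (R * ‖t‖ + 1) (by positivity), Eventually.of_forall fun n => ?_⟩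
  rw [hZ_affine n]
  refine (norm_charFn_randomIndex_sub_le (hNmeas n) (hYmeas n) (hYind n)
    (fun k => (d n)⁻¹ * b n k) (fun k => (d n)⁻¹ • (a n k - c n)) Ylim t).trans ?_
  refine (integral_comp_smul_le_integral_biSup_add (hNmeas n)
    (F := fun k s => ‖charFn P (Y n k) s - charFn P Ylim s‖) (fun _ _ => norm_nonneg _)
    (fun _ _ => norm_charFn_sub_charFn_le_two _ _ _)
    (le_add_of_nonneg_right zero_le_one : R * ‖t‖ ≤ R * ‖t‖ + 1) fun k => (d n)⁻¹ * b n k).trans ?_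
  exact add_le_add le_rfl (by linarith [hR n])

/-- **Lemma 1**: under tightness of `{Uₙ}` and the coherency condition, for every `t ∈ ℝ^m`
one has `|fₙ(t) − gₙ(t)| → 0`, where `fₙ` is the characteristic function of
`Zₙ = dₙ⁻¹ (S_{n,Nₙ} − cₙ)` and `gₙ(t) = E[h(Uₙ t) exp(i⟨t, Vₙ⟩)]`. -/
theorem lemma1_rapprochement
    {Ω : Type*} [MeasurableSpace Ω] (P : Measure Ω) [IsProbabilityMeasure P]
    (m : ℕ)
    -- the double array S_{n,k} and its measurability
    (S : ℕ → ℕ → Ω → EuclideanSpace ℝ (Fin m))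
    (hSmeas : ∀ n k, Measurable (S n k))
    -- non-random centering vectors and positive scaling constants
    (a : ℕ → ℕ → EuclideanSpace ℝ (Fin m)) (b : ℕ → ℕ → ℝ) (hb : ∀ n k, 0 < b n k)
    -- the random sample sizes, positive, measurable, independent of each S_{n,k}
    (N : ℕ → Ω → ℕ) (hNmeas : ∀ n, Measurable (N n)) (hNpos : ∀ n ω, 0 < N n ω)
    (hNindep : ∀ n k, IndepFun (N n) (S n k) P)
    -- non-random vectors cₙ and positive constants dₙ
    (c : ℕ → EuclideanSpace ℝ (Fin m)) (d : ℕ → ℝ) (hd : ∀ n, 0 < d n)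
    -- Y_{n,k} = b_{n,k}⁻¹ (S_{n,k} − a_{n,k})
    (Y : ℕ → ℕ → Ω → EuclideanSpace ℝ (Fin m))
    (hY : ∀ n k ω, Y n k ω = (b n k)⁻¹ • (S n k ω - a n k))
    -- Z_n = d_n⁻¹ (S_{n,N_n} − c_n)
    (Z : ℕ → Ω → EuclideanSpace ℝ (Fin m))
    (hZ : ∀ n ω, Z n ω = (d n)⁻¹ • (S n (N n ω) ω - c n))
    -- U_n = d_n⁻¹ b_{n,N_n},  V_n = d_n⁻¹ (a_{n,N_n} − c_n)
    (U : ℕ → Ω → ℝ) (hU : ∀ n ω, U n ω = (d n)⁻¹ * b n (N n ω))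
    (V : ℕ → Ω → EuclideanSpace ℝ (Fin m))
    (hV : ∀ n ω, V n ω = (d n)⁻¹ • (a n (N n ω) - c n))
    -- the limit random vector Y with characteristic function h
    (Ylim : Ω → EuclideanSpace ℝ (Fin m)) (hYlim : Measurable Ylim)
    (h : EuclideanSpace ℝ (Fin m) → ℂ) (hh : ∀ t, h t = charFn P Ylim t)
    -- weak relative compactness (tightness) of the family {U_n}
    (htight : Tendsto (fun R : ℝ => ⨆ n, P {ω | R < |U n ω|}) atTop (𝓝 0))
    -- coherency condition: for every T > 0,
    -- E[ sup_{‖t‖ ≤ T} |h_{n,N_n}(t) − h(t)| ] → 0 as n → ∞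
    (hcoh : ∀ T : ℝ, 0 < T →
      Tendsto (fun n => ∫ ω,
          ⨆ t ∈ Metric.closedBall (0 : EuclideanSpace ℝ (Fin m)) T,
            ‖(charFn P (Y n (N n ω)) t - h t)‖ ∂P)
        atTop (𝓝 0)) :
    -- conclusion: for every t, |fₙ(t) − gₙ(t)| → 0
    ∀ t : EuclideanSpace ℝ (Fin m),
      Tendsto (fun n =>
          ‖(charFn P (Z n) t -
            ∫ ω, h ((U n ω) • t) * Complex.exp ((⟪t, V n ω⟫ : ℝ) * Complex.I) ∂P)‖)
        atTop (𝓝 0) :=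
  lemma1_rapprochement_general P m S hSmeas a b hb N hNmeas hNindep c d Y hY Z hZ U hU V hV Ylim h
    hh htight hcoh
end

section
/- Let Z and Y be ℝ^m-valued random vectors with characteristic functions f and h respectively, and let W = (U, V^⊤)^⊤ be an ℝ^{m+1}-valued random vector with U a real random variable satisfying P(U ≥ 0) = 1 and V an ℝ^m-valued random vector, such that Y is independent of W. Then f(t) = E[h(U t)·exp(i⟨t, V⟩)] for all t ∈ ℝ^m if and only if Z has the same distribution as U·Y + V. -/
open MeasureTheory ProbabilityTheory Filter Topology
open scoped RealInnerProductSpace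

section

open Complex

variable {Ω : Type*} [MeasurableSpace Ω] {P : Measure Ω}

lemma charFn_eq_charFun_map {m : ℕ} {X : Ω → EuclideanSpace ℝ (Fin m)} (hX : AEMeasurable X P)
    (t : EuclideanSpace ℝ (Fin m)) : charFn P X t = charFun (P.map X) t := by
  rw [charFn, charFun_apply, integral_map hX (by fun_prop)]
  simp_rw [real_inner_comm]

lemma ProbabilityTheory.IndepFun.integral_comp_eq_integral_integral [IsFiniteMeasure P]
    {α β G : Type*} [MeasurableSpace α] [MeasurableSpace β]
    [NormedAddCommGroup G] [NormedSpace ℝ G]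
    {X : Ω → α} {W : Ω → β} (hX : AEMeasurable X P) (hW : AEMeasurable W P)
    (hXW : IndepFun X W P) {F : α × β → G} (hF : Integrable F ((P.map X).prod (P.map W))) :
    ∫ ω, F (X ω, W ω) ∂P = ∫ ω, ∫ x, F (x, W ω) ∂(P.map X) ∂P := by
  have hlaw : P.map (fun ω => (X ω, W ω)) = (P.map X).prod (P.map W) :=
    hXW.map_prod_eq_prod_map_map hX hW
  have hF' : AEStronglyMeasurable F (P.map fun ω => (X ω, W ω)) :=
    hlaw ▸ hF.aestronglyMeasurable
  calc ∫ ω, F (X ω, W ω) ∂P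
      = ∫ z, F z ∂(P.map X).prod (P.map W) := by
        rw [← hlaw, integral_map (hX.prodMk hW) hF']
    _ = ∫ w, ∫ x, F (x, w) ∂(P.map X) ∂(P.map W) := integral_prod_symm F hF
    _ = ∫ ω, ∫ x, F (x, W ω) ∂(P.map X) ∂P :=
        integral_map hW hF.integral_prod_right.aestronglyMeasurable

lemma charFun_map_smul_add_of_indepFun [IsProbabilityMeasure P]
    {E : Type*} [NormedAddCommGroup E] [InnerProductSpace ℝ E] [MeasurableSpace E]
    [BorelSpace E] [SecondCountableTopology E]
    {Y : Ω → E} {U : Ω → ℝ} {V : Ω → E} (hY : Measurable Y) (hU : Measurable U)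
    (hV : Measurable V) (hindep : IndepFun Y (fun ω => (U ω, V ω)) P) (t : E) :
    charFun (P.map fun ω => U ω • Y ω + V ω) t
      = ∫ ω, charFun (P.map Y) (U ω • t) * cexp (⟪V ω, t⟫ * I) ∂P := by
  set F : E × (ℝ × E) → ℂ := fun p => cexp (⟪p.2.1 • p.1 + p.2.2, t⟫ * I)
  have hF : Integrable F ((P.map Y).prod (P.map fun ω => (U ω, V ω))) :=
    Integrable.of_bound (by fun_prop) 1 (ae_of_all _ fun p => by simp [F, norm_exp_ofReal_mul_I])
  rw [charFun_apply, integral_map (by fun_prop) (by fun_prop),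
    hindep.integral_comp_eq_integral_integral (F := F) hY.aemeasurable (by fun_prop) hF]
  congr 1 with ω
  rw [charFun_apply, ← integral_mul_const]
  congr 1 with y
  simp only [F]
  rw [← exp_add, ← add_mul, ← ofReal_add, inner_add_left, real_inner_smul_left,
    real_inner_smul_right]

end

theorem charFn_representation_iff_eq_distribution_general
    {Ω : Type*} [MeasurableSpace Ω] (P : Measure Ω) [IsProbabilityMeasure P]
    (m : ℕ)
    (Z : Ω → EuclideanSpace ℝ (Fin m)) (hZ : Measurable Z)
    (Y : Ω → EuclideanSpace ℝ (Fin m)) (hY : Measurable Y)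
    (f : EuclideanSpace ℝ (Fin m) → ℂ) (hf : ∀ t, f t = charFn P Z t)
    (h : EuclideanSpace ℝ (Fin m) → ℂ) (hh : ∀ t, h t = charFn P Y t)
    (U : Ω → ℝ) (hU : Measurable U)
    (V : Ω → EuclideanSpace ℝ (Fin m)) (hV : Measurable V)
    -- Y is independent of W = (U, V)
    (hindep : IndepFun Y (fun ω => (U ω, V ω)) P) :
    (∀ t : EuclideanSpace ℝ (Fin m),
        f t = ∫ ω, h ((U ω) • t) * Complex.exp ((⟪t, V ω⟫ : ℝ) * Complex.I) ∂P) ↔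
      P.map Z = P.map (fun ω => (U ω) • Y ω + V ω) := by
  have hmixture : ∀ t, ∫ ω, h (U ω • t) * Complex.exp (⟪t, V ω⟫ * Complex.I) ∂P
      = charFun (P.map fun ω => U ω • Y ω + V ω) t := fun t => by
    simp_rw [charFun_map_smul_add_of_indepFun hY hU hV hindep, hh,
      charFn_eq_charFun_map hY.aemeasurable, real_inner_comm]
  simp_rw [hf, charFn_eq_charFun_map hZ.aemeasurable, hmixture]
  exact ⟨fun H => Measure.ext_of_charFun (funext H), fun H t => by rw [H]⟩

/-- Let `Z`, `Y` be `ℝ^m`-valued random vectors with characteristic functions `f`, `h`,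
and let `W = (U, V)` with `P(U ≥ 0) = 1` be independent of `Y`. Then
`f(t) = E[h(U t) exp(i⟨t, V⟩)]` for all `t` iff `Z` is distributed as `U • Y + V`. -/
theorem charFn_representation_iff_eq_distribution
    {Ω : Type*} [MeasurableSpace Ω] (P : Measure Ω) [IsProbabilityMeasure P]
    (m : ℕ)
    (Z : Ω → EuclideanSpace ℝ (Fin m)) (hZ : Measurable Z)
    (Y : Ω → EuclideanSpace ℝ (Fin m)) (hY : Measurable Y)
    (f : EuclideanSpace ℝ (Fin m) → ℂ) (hf : ∀ t, f t = charFn P Z t)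
    (h : EuclideanSpace ℝ (Fin m) → ℂ) (hh : ∀ t, h t = charFn P Y t)
    (U : Ω → ℝ) (hU : Measurable U)
    (V : Ω → EuclideanSpace ℝ (Fin m)) (hV : Measurable V)
    -- P(U ≥ 0) = 1
    (hUnonneg : P {ω | 0 ≤ U ω} = 1)
    -- Y is independent of W = (U, V)
    (hindep : IndepFun Y (fun ω => (U ω, V ω)) P) :
    (∀ t : EuclideanSpace ℝ (Fin m),
        f t = ∫ ω, h ((U ω) • t) * Complex.exp ((⟪t, V ω⟫ : ℝ) * Complex.I) ∂P) ↔
      P.map Z = P.map (fun ω => (U ω) • Y ω + V ω) :=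
  charFn_representation_iff_eq_distribution_general P m Z hZ Y hY f hf h hh U hU V hV hindep
end
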